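/- arXiv:2309.07962 — 3 statements merged into one kernel-verified Lean document; each statement's English description precedes it below -/
import Mathlib

section
/- Let K be a commutative ring and A a nonunital associative K-algebra, regarded as an alternative algebra. Then there is a surjective homomorphism of unital K-algebras U_Alt(A) → (A₊)ᵒᵖ ⊗_K A₊ carrying the class of l_a to aᵒᵖ ⊗ 1 and the class of r_b to 1 ⊗ b, where A₊ is the unitization of A. -/
noncomputable section

open scoped TensorProduct

/-- `l_a ∈ Tens_R(A ⊕ A)`. -/
def lT (R A : Type) [CommRing R] [NonUnitalNonAssocRing A] [Module R A] (a : A) :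
    TensorAlgebra R (A × A) :=
  TensorAlgebra.ι R (a, 0)

/-- `r_a ∈ Tens_R(A ⊕ A)`. -/
def rT (R A : Type) [CommRing R] [NonUnitalNonAssocRing A] [Module R A] (a : A) :
    TensorAlgebra R (A × A) :=
  TensorAlgebra.ι R (0, a)

/-- The relations defining the alternative universal enveloping algebra `U_Alt(A)`:
quotienting `Tens_R(A ⊕ A)` by this relation is the same as quotienting by the two-sided
ideal generated by `l_{aa} − l_a·l_a`, `r_{bb} − r_b·r_b`,
`(l_{ab} − l_b·l_a) − (r_b·l_a − l_a·r_b)` and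
`(r_b·l_a − l_a·r_b) − (r_a·r_b − r_{ab})` for all `a, b ∈ A`. -/
inductive AltRel (R A : Type) [CommRing R] [NonUnitalNonAssocRing A] [Module R A] :
    TensorAlgebra R (A × A) → TensorAlgebra R (A × A) → Prop
  | lsq (a : A) : AltRel R A (lT R A (a * a)) (lT R A a * lT R A a)
  | rsq (b : A) : AltRel R A (rT R A (b * b)) (rT R A b * rT R A b)
  | lmid (a b : A) : AltRel R A (lT R A (a * b) - lT R A b * lT R A a)
      (rT R A b * lT R A a - lT R A a * rT R A b)
  | rmid (a b : A) : AltRel R A (rT R A b * lT R A a - lT R A a * rT R A b)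
      (rT R A a * rT R A b - rT R A (a * b))

/-- The alternative universal enveloping algebra `U_Alt(A)`. -/
def UAlt (R A : Type) [CommRing R] [NonUnitalNonAssocRing A] [Module R A] : Type :=
  RingQuot (AltRel R A)

instance (R A : Type) [CommRing R] [NonUnitalNonAssocRing A] [Module R A] :
    Ring (UAlt R A) :=
  inferInstanceAs (Ring (RingQuot (AltRel R A)))

instance (R A : Type) [CommRing R] [NonUnitalNonAssocRing A] [Module R A] :
    Algebra R (UAlt R A) :=
  inferInstanceAs (Algebra R (RingQuot (AltRel R A)))

/-- The image of `l_a` in `U_Alt(A)`. -/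
def lUAlt (R A : Type) [CommRing R] [NonUnitalNonAssocRing A] [Module R A] (a : A) :
    UAlt R A :=
  RingQuot.mkAlgHom R (AltRel R A) (lT R A a)

/-- The image of `r_a` in `U_Alt(A)`. -/
def rUAlt (R A : Type) [CommRing R] [NonUnitalNonAssocRing A] [Module R A] (a : A) :
    UAlt R A :=
  RingQuot.mkAlgHom R (AltRel R A) (rT R A a)


/-!
The algebra `(A₊)ᵒᵖ ⊗ A₊` is generated by the elements `aᵒᵖ ⊗ 1` and `1 ⊗ b`. Because `A` is
associative, `a ↦ aᵒᵖ ⊗ 1` is anti-multiplicative, `b ↦ 1 ⊗ b` is multiplicative, and the two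
families commute; these three facts already kill every defining relation of `U_Alt(A)`, so the
assignment extends to `U_Alt(A)`, and its image contains the generators.
-/

theorem Algebra.TensorProduct.range_includeLeft_sup_range_includeRight (R A B : Type*)
    [CommSemiring R] [Semiring A] [Semiring B] [Algebra R A] [Algebra R B] :
    (includeLeft : A →ₐ[R] A ⊗[R] B).range ⊔ (includeRight : B →ₐ[R] A ⊗[R] B).range = ⊤ := by
  simpa using (map_range (AlgHom.id R A) (AlgHom.id R B)).symm

namespace UAlt

section lift

variable {K A B : Type} [CommRing K] [NonUnitalNonAssocRing A] [Module K A] [Ring B] [Algebra K B]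
  (l r : A →ₗ[K] B)

theorem tensorAlgebraLift_eq_of_altRel (hl : ∀ a b, l (a * b) = l b * l a)
    (hr : ∀ a b, r (a * b) = r a * r b) (hlr : ∀ a b, Commute (l a) (r b))
    ⦃x y : TensorAlgebra K (A × A)⦄ (h : AltRel K A x y) :
    TensorAlgebra.lift K (l.coprod r) x = TensorAlgebra.lift K (l.coprod r) y := by
  have hlT a : TensorAlgebra.lift K (l.coprod r) (lT K A a) = l a := by simp [lT]
  have hrT b : TensorAlgebra.lift K (l.coprod r) (rT K A b) = r b := by simp [rT]
  induction h with
  | lsq a => simp [hlT, hl]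
  | rsq b => simp [hrT, hr]
  | lmid a b => simp [hlT, hrT, hl, (hlr a b).eq]
  | rmid a b => simp [hlT, hrT, hr, (hlr a b).eq]

variable (hl : ∀ a b, l (a * b) = l b * l a) (hr : ∀ a b, r (a * b) = r a * r b)
  (hlr : ∀ a b, Commute (l a) (r b))

def lift : UAlt K A →ₐ[K] B :=
  RingQuot.liftAlgHom K
    ⟨TensorAlgebra.lift K (l.coprod r), tensorAlgebraLift_eq_of_altRel l r hl hr hlr⟩

theorem lift_lUAlt (a : A) : lift l r hl hr hlr (lUAlt K A a) = l a :=
  (RingQuot.liftAlgHom_mkAlgHom_apply K _ _ _).trans (by simp [lT])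

theorem lift_rUAlt (b : A) : lift l r hl hr hlr (rUAlt K A b) = r b :=
  (RingQuot.liftAlgHom_mkAlgHom_apply K _ _ _).trans (by simp [rT])

end lift

section unitization

variable (K A : Type) [CommRing K] [NonUnitalRing A] [Module K A] [IsScalarTower K A A]
  [SMulCommClass K A A]

open Algebra.TensorProduct MulOpposite

def toUnitizationTensor : UAlt K A →ₐ[K] (Unitization K A)ᵐᵒᵖ ⊗[K] Unitization K A :=
  lift (includeLeft.toLinearMap ∘ₗ (opLinearEquiv K).toLinearMap ∘ₗ Unitization.inrHom K K A)
    (includeRight.toLinearMap ∘ₗ Unitization.inrHom K K A)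
    (fun a b => by simp [Unitization.inr_mul])
    (fun a b => by simp [Unitization.inr_mul])
    (fun a b => (Commute.one_right _).tmul (Commute.one_left _))

variable {K A}

theorem toUnitizationTensor_lUAlt (a : A) :
    toUnitizationTensor K A (lUAlt K A a) = op (a : Unitization K A) ⊗ₜ[K] 1 :=
  lift_lUAlt _ _ _ _ _ a

theorem toUnitizationTensor_rUAlt (b : A) :
    toUnitizationTensor K A (rUAlt K A b) = 1 ⊗ₜ[K] (b : Unitization K A) :=
  lift_rUAlt _ _ _ _ _ b

theorem toUnitizationTensor_surjective : Function.Surjective (toUnitizationTensor K A) := by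
  set S := (toUnitizationTensor K A).range
  rw [← AlgHom.range_eq_top, eq_top_iff, ← range_includeLeft_sup_range_includeRight]
  refine sup_le ?_ ?_
  · rintro _ ⟨u, rfl⟩
    induction u with | h u => ?_
    induction u using Unitization.ind with
    | inl_add_inr k a =>
      have hk : op (Unitization.inl k : Unitization K A) ⊗ₜ[K] (1 : Unitization K A) ∈ S := by
        simpa only [Algebra.TensorProduct.algebraMap_apply, MulOpposite.algebraMap_apply,
          Unitization.algebraMap_eq_inl] using algebraMap_mem S k
      rw [op_add, map_add]
      exact add_mem hk ⟨lUAlt K A a, toUnitizationTensor_lUAlt a⟩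
  · rintro _ ⟨u, rfl⟩
    induction u using Unitization.ind with
    | inl_add_inr k b =>
      have hk : (1 : (Unitization K A)ᵐᵒᵖ) ⊗ₜ[K] (Unitization.inl k : Unitization K A) ∈ S := by
        simpa only [algebraMap_apply', Unitization.algebraMap_eq_inl] using algebraMap_mem S k
      rw [map_add]
      exact add_mem hk ⟨rUAlt K A b, toUnitizationTensor_rUAlt b⟩

end unitization

end UAlt

/-- For a nonunital associative `K`-algebra `A`, there is a surjection of unital
`K`-algebras `U_Alt(A) → (A₊)ᵒᵖ ⊗_K A₊` with `l_a ↦ aᵒᵖ ⊗ 1` and `r_b ↦ 1 ⊗ b`. -/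
theorem uAlt_to_uAss_surjective (K A : Type) [CommRing K] [NonUnitalRing A] [Module K A]
    [IsScalarTower K A A] [SMulCommClass K A A] :
    ∃ f : UAlt K A →ₐ[K] (Unitization K A)ᵐᵒᵖ ⊗[K] Unitization K A,
      Function.Surjective f ∧
      (∀ a : A, f (lUAlt K A a) = MulOpposite.op (a : Unitization K A) ⊗ₜ[K] 1) ∧
      (∀ b : A, f (rUAlt K A b) = 1 ⊗ₜ[K] (b : Unitization K A)) :=
  ⟨UAlt.toUnitizationTensor K A, UAlt.toUnitizationTensor_surjective,
    UAlt.toUnitizationTensor_lUAlt, UAlt.toUnitizationTensor_rUAlt⟩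

end
end

section
/- Let K be a commutative ring and A an alternative K-algebra (a K-module with a K-bilinear product satisfying (xx)y = x(xy) and (xy)y = x(yy)) which is free of rank n as a K-module. Then U_Alt(A) admits a set of K-module generators with at most 2·2^n + (n² + n − 2)/2 elements; that is, there is a finite subset S of U_Alt(A) with card(S) ≤ 2·2^n + (n² + n − 2)/2 whose K-linear span is all of U_Alt(A). -/
noncomputable section

open scoped TensorProduct

/-!
The defining relations let `r_b` be pushed to the right past `l_a` (`r_b l_a` and `r_a r_b` are
combinations of `l`-words and of `l`-words followed by one `r`), so `U_Alt(A)` is spanned by the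
words `l_{a₁} ⋯ l_{a_k}` and `l_{a₁} ⋯ l_{a_k} r_c`. Modulo shorter words, the `l`-letters
anticommute and square to zero (polarise `l_{aa} = l_a l_a`), and so do the last `l`-letter and the
`r`-letter of a word of length at least three, because `l_x l_y r_y` is a combination of shorter
words (`l_y` commutes with `r_y`). Expanding the letters in the basis `b`, every word therefore
reduces to strictly increasing ones: `2^n` words in `l`, `2^n - 1` words ending in `r`, and the
`n(n+1)/2` words `l_i r_j` with `j ≤ i` left over in length two.
-/

theorem Module.Basis.linearMap_apply_mem {ι R M N : Type*} [Semiring R] [AddCommMonoid M]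
    [Module R M] [AddCommMonoid N] [Module R N] (b : Module.Basis ι R M) (φ : M →ₗ[R] N)
    {P : Submodule R N} (h : ∀ i, φ (b i) ∈ P) (x : M) : φ x ∈ P :=
  (Submodule.span_le (p := P.comap φ)).mpr (Set.range_subset_iff.mpr h) (b.mem_span x)

theorem Submodule.eq_top_of_one_mem_of_mul_mem {R B : Type*} [CommSemiring R] [Semiring B]
    [Algebra R B] {s : Set B} (hs : Algebra.adjoin R s = ⊤) {M : Submodule R B}
    (h1 : 1 ∈ M) (hmul : ∀ x ∈ s, ∀ m ∈ M, x * m ∈ M) : M = ⊤ := by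
  refine eq_top_iff.mpr ?_
  rintro u -
  suffices ∀ m ∈ M, u * m ∈ M by simpa using this 1 h1
  induction (hs ▸ Algebra.mem_top : u ∈ Algebra.adjoin R s) using Algebra.adjoin_induction with
  | mem x hx => exact hmul x hx
  | algebraMap c => exact fun m hm => by simpa [← Algebra.smul_def] using M.smul_mem c hm
  | add x y _ _ hx hy => exact fun m hm => by simpa [add_mul] using M.add_mem (hx m hm) (hy m hm)
  | mul x y _ _ hx hy => exact fun m hm => by simpa [mul_assoc] using hx _ (hy m hm)

open Finset in
theorem two_mul_card_filter_snd_le_fst (n : ℕ) :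
    2 * #{p : Fin n × Fin n | p.2 ≤ p.1} = n * (n + 1) := by
  have h : #{p : Fin n × Fin n | p.2 ≤ p.1} = ∑ k ∈ range (n + 1), k := by
    rw [card_filter, Fintype.sum_prod_type, sum_range_succ', ← Fin.sum_univ_eq_sum_range]
    simp [sum_boole, filter_ge_eq_Iic]
  rw [h, mul_comm, sum_range_id_mul_two]
  simp [mul_comm]

namespace List

variable {ι : Type*} [LinearOrder ι]

def inversions : List ι → ℕ
  | [] => 0
  | a :: t => t.countP (· < a) + inversions t

theorem inversions_append_cons_cons_lt (u t : List ι) {p q : ι} (h : q < p) :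
    inversions (u ++ q :: p :: t) < inversions (u ++ p :: q :: t) := by
  induction u with
  | nil => simp [inversions, h, not_lt.mpr h.le]; omega
  | cons a u ih => simp only [cons_append, inversions, countP_append, countP_cons] at ih ⊢; omega

theorem apply_mem_of_alternating {M : Type*} [AddCommGroup M] {N : AddSubgroup M}
    {f : List ι → M} {k : ℕ} (sorted : ∀ v : List ι, v.length = k → v.IsChain (· < ·) → f v ∈ N)
    (swap : ∀ (u t : List ι) (p q : ι), (u ++ p :: q :: t).length = k → q < p →
      f (u ++ p :: q :: t) + f (u ++ q :: p :: t) ∈ N)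
    (dup : ∀ (u t : List ι) (p : ι), (u ++ p :: p :: t).length = k → f (u ++ p :: p :: t) ∈ N)
    (v : List ι) (hv : v.length = k) : f v ∈ N := by
  induction h : v.inversions using Nat.strong_induction_on generalizing v with
  | _ m ih =>
  by_cases hs : v.IsChain (· < ·)
  · exact sorted v hv hs
  obtain ⟨p, q, u, t, rfl, hpq⟩ : ∃ p q u t, v = u ++ p :: q :: t ∧ ¬ p < q := by
    simpa [isChain_iff_forall_rel_of_append_cons_cons] using hs
  obtain hlt | rfl := (not_lt.mp hpq).lt_or_eq
  · have hv' : (u ++ q :: p :: t).length = k := by simpa using hv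
    have := ih _ (h ▸ inversions_append_cons_cons_lt u t hlt) _ hv' rfl
    simpa using N.sub_mem (swap u t p q hv hlt) this
  · exact dup u t q hv

theorem sort_toFinset_of_isChain_lt {w : List ι} (hw : w.IsChain (· < ·)) :
    w.toFinset.sort = w := by
  have hw := isChain_iff_pairwise.mp hw
  exact (toFinset_sort _ (hw.imp ne_of_lt)).mpr (hw.imp le_of_lt)

end List

namespace UAlt

section Relations

variable (K : Type) {A : Type} [CommRing K] [NonUnitalNonAssocRing A] [Module K A]

def l : A →ₗ[K] UAlt K A :=
  (RingQuot.mkAlgHom K (AltRel K A)).toLinearMap ∘ₗ TensorAlgebra.ι K ∘ₗ LinearMap.inl K A A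

def r : A →ₗ[K] UAlt K A :=
  (RingQuot.mkAlgHom K (AltRel K A)).toLinearMap ∘ₗ TensorAlgebra.ι K ∘ₗ LinearMap.inr K A A

theorem l_mul_self (a : A) : l K (a * a) = l K a * l K a :=
  (RingQuot.mkAlgHom_rel K (AltRel.lsq a)).trans (map_mul _ _ _)

theorem r_mul_self (a : A) : r K (a * a) = r K a * r K a :=
  (RingQuot.mkAlgHom_rel K (AltRel.rsq a)).trans (map_mul _ _ _)

theorem l_mul_sub_l_mul_l (a b : A) :
    l K (a * b) - l K b * l K a = r K b * l K a - l K a * r K b := by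
  have h := RingQuot.mkAlgHom_rel K (AltRel.lmid (R := K) a b)
  simp only [map_sub, map_mul] at h
  exact h

theorem r_mul_l_sub_l_mul_r (a b : A) :
    r K b * l K a - l K a * r K b = r K a * r K b - r K (a * b) := by
  have h := RingQuot.mkAlgHom_rel K (AltRel.rmid (R := K) a b)
  simp only [map_sub, map_mul] at h
  exact h

theorem r_mul_l (a b : A) : r K b * l K a = l K a * r K b + l K (a * b) - l K b * l K a := by
  linear_combination (norm := abel) -(l_mul_sub_l_mul_l K a b)

theorem r_mul_r (a b : A) : r K a * r K b = r K (a * b) + l K (a * b) - l K b * l K a := by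
  linear_combination (norm := abel) -l_mul_sub_l_mul_l K a b - r_mul_l_sub_l_mul_r K a b

theorem l_mul_l (a b : A) : l K b * l K a = l K (a * b) + r K (a * b) - r K a * r K b := by
  linear_combination (norm := abel) -l_mul_sub_l_mul_l K a b - r_mul_l_sub_l_mul_r K a b

theorem l_mul_l_add_l_mul_l (a b : A) :
    l K a * l K b + l K b * l K a = l K (a * b + b * a) := by
  have h := l_mul_self K (a + b)
  simp only [add_mul, mul_add, map_add, l_mul_self] at h
  rw [map_add]
  linear_combination (norm := abel) -h

theorem commute_l_r_self (a : A) : Commute (l K a) (r K a) := by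
  have h := r_mul_l K a a
  rw [l_mul_self, add_sub_cancel_right] at h
  exact h.symm

theorem adjoin_range_l_union_range_r :
    Algebra.adjoin K (Set.range (l K) ∪ Set.range (r K) : Set (UAlt K A)) = ⊤ := by
  refine eq_top_iff.mpr ?_
  rintro u -
  obtain ⟨t, rfl⟩ := RingQuot.mkAlgHom_surjective K (AltRel K A) u
  induction t using TensorAlgebra.induction with
  | algebraMap c => rw [AlgHom.commutes]; exact Subalgebra.algebraMap_mem _ c
  | ι x =>
    have hx : RingQuot.mkAlgHom K (AltRel K A) (TensorAlgebra.ι K x) = l K x.1 + r K x.2 := by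
      conv_lhs => rw [← Prod.fst_add_snd x, map_add, map_add]
      rfl
    rw [hx]
    exact add_mem (Algebra.subset_adjoin (Or.inl ⟨_, rfl⟩))
      (Algebra.subset_adjoin (Or.inr ⟨_, rfl⟩))
  | mul a c ha hc => rw [map_mul]; exact mul_mem ha hc
  | add a c ha hc => rw [map_add]; exact add_mem ha hc

end Relations

section Words

variable (K : Type) {A : Type} [CommRing K] [NonUnitalNonAssocRing A] [Module K A]

def lWord (v : List A) : UAlt K A := (v.map (l K)).prod

@[simp] theorem lWord_nil : lWord K ([] : List A) = 1 := rfl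

@[simp] theorem lWord_cons (x : A) (v : List A) : lWord K (x :: v) = l K x * lWord K v := by
  simp [lWord]

@[simp] theorem lWord_append (u v : List A) : lWord K (u ++ v) = lWord K u * lWord K v := by
  simp [lWord]

@[simp] theorem lWord_singleton (x : A) : lWord K [x] = l K x := by simp

theorem lWord_append_cons_cons_add (u t : List A) (x y : A) :
    lWord K (u ++ x :: y :: t) + lWord K (u ++ y :: x :: t) =
      lWord K (u ++ (x * y + y * x) :: t) := by
  simp only [lWord_append, lWord_cons, ← l_mul_l_add_l_mul_l]
  noncomm_ring

theorem lWord_append_cons_cons_self (u t : List A) (x : A) :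
    lWord K (u ++ x :: x :: t) = lWord K (u ++ (x * x) :: t) := by
  simp only [lWord_append, lWord_cons, l_mul_self, mul_assoc]

def wordSpan : Submodule K (UAlt K A) :=
  Submodule.span K {X | (∃ v, X = lWord K v) ∨ ∃ v z, X = lWord K v * r K z}

theorem lWord_mem_wordSpan (v : List A) : lWord K v ∈ wordSpan K :=
  Submodule.subset_span (Or.inl ⟨v, rfl⟩)

theorem lWord_mul_r_mem_wordSpan (v : List A) (z : A) : lWord K v * r K z ∈ wordSpan K :=
  Submodule.subset_span (Or.inr ⟨v, z, rfl⟩)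

theorem l_mul_mem_wordSpan (x : A) {m : UAlt K A} (hm : m ∈ wordSpan K) :
    l K x * m ∈ wordSpan K := by
  refine (Submodule.span_le (p := (wordSpan K).comap (LinearMap.mulLeft K (l K x)))).mpr ?_ hm
  rintro _ (⟨v, rfl⟩ | ⟨v, z, rfl⟩)
  · simpa using lWord_mem_wordSpan K (x :: v)
  · simpa [mul_assoc] using lWord_mul_r_mem_wordSpan K (x :: v) z

theorem r_mul_lWord_mul_mem_wordSpan (z : A) {d : UAlt K A}
    (hd : ∀ v, lWord K v * d ∈ wordSpan K) (hzd : r K z * d ∈ wordSpan K) (v : List A) :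
    r K z * (lWord K v * d) ∈ wordSpan K := by
  induction v with
  | nil => simpa using hzd
  | cons x v ih =>
    have e : r K z * (lWord K (x :: v) * d) = l K x * (r K z * (lWord K v * d)) +
        lWord K (x * z :: v) * d - lWord K (z :: x :: v) * d := by
      rw [lWord_cons, show r K z * (l K x * lWord K v * d) = r K z * l K x * (lWord K v * d) by
        noncomm_ring, r_mul_l]
      simp only [lWord_cons]
      noncomm_ring
    rw [e]
    exact sub_mem (add_mem (l_mul_mem_wordSpan K x ih) (hd _)) (hd _)

theorem r_mul_mem_wordSpan (z : A) {m : UAlt K A} (hm : m ∈ wordSpan K) :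
    r K z * m ∈ wordSpan K := by
  refine (Submodule.span_le (p := (wordSpan K).comap (LinearMap.mulLeft K (r K z)))).mpr ?_ hm
  rintro _ (⟨v, rfl⟩ | ⟨v, z', rfl⟩)
  · simpa using r_mul_lWord_mul_mem_wordSpan K z (d := 1) (by simpa using lWord_mem_wordSpan K)
      (by simpa using lWord_mul_r_mem_wordSpan K [] z) v
  · refine r_mul_lWord_mul_mem_wordSpan K z (lWord_mul_r_mem_wordSpan K · z') ?_ v
    rw [r_mul_r]
    refine sub_mem (add_mem (by simpa using lWord_mul_r_mem_wordSpan K [] (z * z')) ?_) ?_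
    · simpa using lWord_mem_wordSpan K [z * z']
    · simpa using lWord_mem_wordSpan K [z', z]

theorem wordSpan_eq_top : wordSpan K = (⊤ : Submodule K (UAlt K A)) := by
  refine Submodule.eq_top_of_one_mem_of_mul_mem (adjoin_range_l_union_range_r K)
    (by simpa using lWord_mem_wordSpan K []) ?_
  rintro _ (⟨x, rfl⟩ | ⟨z, rfl⟩) m hm
  · exact l_mul_mem_wordSpan K x hm
  · exact r_mul_mem_wordSpan K z hm

def shortWordSpan : Submodule K (UAlt K A) :=
  Submodule.span K {X | (∃ v, X = lWord K v) ∨ ∃ v z, v.length ≤ 1 ∧ X = lWord K v * r K z}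

theorem lWord_mem_shortWordSpan (v : List A) : lWord K v ∈ shortWordSpan K :=
  Submodule.subset_span (Or.inl ⟨v, rfl⟩)

theorem lWord_mul_r_mem_shortWordSpan {v : List A} (hv : v.length ≤ 1) (z : A) :
    lWord K v * r K z ∈ shortWordSpan K :=
  Submodule.subset_span (Or.inr ⟨v, z, hv, rfl⟩)

/- Since `l_y` commutes with `r_y`, the letter `r_y` can be moved to the front; then expand
`l_x l_y = l_{yx} + r_{yx} - r_y r_x`, and each resulting product `r_y ⋯` is a short word by the
relations. -/
theorem l_mul_l_mul_r_self_mem_shortWordSpan (x y : A) :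
    l K x * l K y * r K y ∈ shortWordSpan K := by
  have key : l K x * l K y * r K y = lWord K [y * x] * r K y + lWord K [] * r K (y * (y * x)) -
      lWord K [] * r K (y * y * x) + (lWord K [y * x * y] - lWord K [y, y * x] +
        lWord K [y * (y * x)] - lWord K [y * x, y] - lWord K [y * y * x] + lWord K [x, y * y] -
        lWord K [x * y, y] + lWord K [y, x, y]) := by
    simp only [lWord_cons, lWord_nil, mul_one, one_mul]
    linear_combination (norm := noncomm_ring) l K x * (commute_l_r_self K y).eq
      - r_mul_l K x y * l K y + r K y * l_mul_l K y x + r_mul_l K (y * x) y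
      + r_mul_r K y (y * x) + r_mul_self K y * r K x - r_mul_r K (y * y) x
  rw [key]
  apply_rules [add_mem, sub_mem, lWord_mem_shortWordSpan, lWord_mul_r_mem_shortWordSpan] <;> simp

theorem l_mul_l_mul_r_add_mem_shortWordSpan (x y z : A) :
    l K x * l K y * r K z + l K x * l K z * r K y ∈ shortWordSpan K := by
  have key : l K x * l K y * r K z + l K x * l K z * r K y = l K x * l K (y + z) * r K (y + z) -
      l K x * l K y * r K y - l K x * l K z * r K z := by
    simp only [map_add]
    noncomm_ring
  rw [key]
  apply_rules [sub_mem, l_mul_l_mul_r_self_mem_shortWordSpan]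

theorem lWord_mul_mem_of_mem_shortWordSpan {P : Submodule K (UAlt K A)} (u : List A)
    (hl : ∀ v, lWord K v ∈ P) (hr : ∀ v z, v.length ≤ u.length + 1 → lWord K v * r K z ∈ P)
    {X : UAlt K A} (hX : X ∈ shortWordSpan K) : lWord K u * X ∈ P := by
  refine (Submodule.span_le (p := P.comap (LinearMap.mulLeft K (lWord K u)))).mpr ?_ hX
  rintro _ (⟨v, rfl⟩ | ⟨v, z, hv, rfl⟩)
  · simpa using hl (u ++ v)
  · simpa [mul_assoc] using hr (u ++ v) z (by simpa using hv)

end Words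

section Basis

open Finset

variable {K : Type} {A : Type} [CommRing K] [NonUnitalNonAssocRing A] [Module K A]
  {n : ℕ} (b : Module.Basis (Fin n) K A)

def lBasisWord (w : List (Fin n)) : UAlt K A := lWord K (w.map b)

/-- The last letter of `w` is read as an `r`-letter; the empty word gives `0`. -/
def rBasisWord (w : List (Fin n)) : UAlt K A :=
  w.getLast?.elim 0 fun j => lBasisWord b w.dropLast * r K (b j)

theorem rBasisWord_append_singleton (w : List (Fin n)) (j : Fin n) :
    rBasisWord b (w ++ [j]) = lBasisWord b w * r K (b j) := by
  simp [rBasisWord]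

/- The words `l_i r_j` with `j ≤ i` cannot be sorted: exchanging the letters of `l_x r_y` modulo
shorter words needs an `l`-letter in front of it. -/
open Classical in
def sortedWords : Finset (UAlt K A) :=
  (univ.image fun T : Finset (Fin n) => lBasisWord b T.sort) ∪
    ((univ.erase ∅).image fun T : Finset (Fin n) => rBasisWord b T.sort) ∪
    ({p : Fin n × Fin n | p.2 ≤ p.1} : Finset _).image fun p => l K (b p.1) * r K (b p.2)

theorem card_sortedWords : 2 * #(sortedWords b) + 2 ≤ 4 * 2 ^ n + n * (n + 1) := by
  classical
  have hL : #(univ.image fun T : Finset (Fin n) => lBasisWord b T.sort) ≤ 2 ^ n :=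
    card_image_le.trans (by simp)
  have hR : #((univ.erase ∅).image fun T : Finset (Fin n) => rBasisWord b T.sort) ≤ 2 ^ n - 1 :=
    card_image_le.trans (by simp [card_erase_of_mem])
  have hP : #(({p : Fin n × Fin n | p.2 ≤ p.1} : Finset _).image
      fun p => l K (b p.1) * r K (b p.2)) ≤ #({p : Fin n × Fin n | p.2 ≤ p.1} : Finset _) :=
    card_image_le
  have hS : #(sortedWords b) ≤ _ :=
    (card_union_le _ _).trans (Nat.add_le_add_right (card_union_le _ _) _)
  have := two_mul_card_filter_snd_le_fst n
  have := Nat.one_le_two_pow (n := n)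
  omega

def sortedSpan : Submodule K (UAlt K A) := Submodule.span K (sortedWords b)

theorem lBasisWord_mem_sortedSpan_of_isChain {w : List (Fin n)} (hw : w.IsChain (· < ·)) :
    lBasisWord b w ∈ sortedSpan b := by
  refine Submodule.subset_span ?_
  simp only [sortedWords, coe_union, coe_image, Set.mem_union, Set.mem_image]
  exact Or.inl (Or.inl ⟨w.toFinset, by simp, by rw [List.sort_toFinset_of_isChain_lt hw]⟩)

theorem rBasisWord_mem_sortedSpan_of_isChain {w : List (Fin n)} (hw : w.IsChain (· < ·))
    (hne : w ≠ []) : rBasisWord b w ∈ sortedSpan b := by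
  refine Submodule.subset_span ?_
  simp only [sortedWords, coe_union, coe_image, Set.mem_union, Set.mem_image]
  exact Or.inl (Or.inr
    ⟨w.toFinset, by simpa using hne, by rw [List.sort_toFinset_of_isChain_lt hw]⟩)

theorem l_mul_r_mem_sortedSpan {i j : Fin n} (h : j ≤ i) :
    l K (b i) * r K (b j) ∈ sortedSpan b := by
  refine Submodule.subset_span ?_
  simp only [sortedWords, coe_union, coe_image, Set.mem_union, Set.mem_image]
  exact Or.inr ⟨(i, j), by simpa using h, rfl⟩

theorem lWord_mul_mem_of_basis {P : Submodule K (UAlt K A)} {d : UAlt K A} (v : List A)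
    (h : ∀ w : List (Fin n), w.length = v.length → lBasisWord b w * d ∈ P) :
    lWord K v * d ∈ P := by
  induction v using List.reverseRecOn generalizing d with
  | nil => simpa [lBasisWord] using h [] rfl
  | append_singleton v x ih =>
    rw [lWord_append, mul_assoc, lWord_singleton]
    refine ih fun w hw => ?_
    refine b.linearMap_apply_mem
      (LinearMap.mulLeft K (lBasisWord b w) ∘ₗ LinearMap.mulRight K d ∘ₗ l K) (fun i => ?_) x
    simpa [lBasisWord, mul_assoc] using h (w ++ [i]) (by simp [hw])

theorem lBasisWord_swap_mul_mem {P : Submodule K (UAlt K A)} {d : UAlt K A} {k : ℕ}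
    (IH : ∀ v : List A, v.length < k → lWord K v * d ∈ P) {u t : List (Fin n)} {p q : Fin n}
    (hlen : (u ++ p :: q :: t).length = k) :
    lBasisWord b (u ++ p :: q :: t) * d + lBasisWord b (u ++ q :: p :: t) * d ∈ P := by
  have := IH (u.map b ++ (b p * b q + b q * b p) :: t.map b) (by simp at hlen ⊢; omega)
  simp only [lBasisWord, List.map_append, List.map_cons] at this ⊢
  rwa [← add_mul, lWord_append_cons_cons_add]

theorem lBasisWord_dup_mul_mem {P : Submodule K (UAlt K A)} {d : UAlt K A} {k : ℕ}
    (IH : ∀ v : List A, v.length < k → lWord K v * d ∈ P) {u t : List (Fin n)} {p : Fin n}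
    (hlen : (u ++ p :: p :: t).length = k) : lBasisWord b (u ++ p :: p :: t) * d ∈ P := by
  have := IH (u.map b ++ (b p * b p) :: t.map b) (by simp at hlen ⊢; omega)
  simp only [lBasisWord, List.map_append, List.map_cons] at this ⊢
  rwa [lWord_append_cons_cons_self]

theorem lBasisWord_mem_sortedSpan_of_shorter {k : ℕ}
    (IH : ∀ v : List A, v.length < k → lWord K v ∈ sortedSpan b)
    (w : List (Fin n)) (hw : w.length = k) : lBasisWord b w ∈ sortedSpan b := by
  have IH₁ : ∀ v : List A, v.length < k → lWord K v * 1 ∈ sortedSpan b := by simpa using IH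
  refine List.apply_mem_of_alternating (N := (sortedSpan b).toAddSubgroup)
    (fun v _ hv => lBasisWord_mem_sortedSpan_of_isChain b hv)
    (fun u t p q hlen _ => by simpa using lBasisWord_swap_mul_mem b IH₁ hlen)
    (fun u t p hlen => by simpa using lBasisWord_dup_mul_mem b IH₁ hlen) w hw

theorem lWord_mem_sortedSpan (v : List A) : lWord K v ∈ sortedSpan b := by
  induction h : v.length using Nat.strong_induction_on generalizing v with
  | _ k IH =>
  simpa using lWord_mul_mem_of_basis b (d := 1) v fun w hw => by
    simpa using
      lBasisWord_mem_sortedSpan_of_shorter b (fun v' hv' => IH _ hv' v' rfl) w (hw.trans h)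

theorem rBasisWord_mem_sortedSpan_of_shorter {k : ℕ} (hk : 3 ≤ k)
    (IH : ∀ (v : List A) (z : A), v.length + 1 < k → lWord K v * r K z ∈ sortedSpan b)
    (w : List (Fin n)) (hw : w.length = k) : rBasisWord b w ∈ sortedSpan b := by
  have junction : ∀ (u : List (Fin n)) {X : UAlt K A}, u.length + 3 = k →
      X ∈ shortWordSpan K → lBasisWord b u * X ∈ sortedSpan b := fun u _ hu hX =>
    lWord_mul_mem_of_mem_shortWordSpan K (u.map b) (lWord_mem_sortedSpan b)
      (fun v z hv => IH v z (by simp at hv; omega)) hX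
  refine List.apply_mem_of_alternating (N := (sortedSpan b).toAddSubgroup)
    (fun v hv hs => rBasisWord_mem_sortedSpan_of_isChain b hs (by rintro rfl; simp at hv; omega))
    (fun u t p q hlen _ => ?_) (fun u t p hlen => ?_) w hw
  · obtain rfl | ⟨t, c, rfl⟩ := List.eq_nil_or_concat' t
    · obtain rfl | ⟨u, s, rfl⟩ := List.eq_nil_or_concat' u
      · simp at hlen; omega
      have := junction u (by simp at hlen; omega)
        (l_mul_l_mul_r_add_mem_shortWordSpan K (b s) (b p) (b q))
      rw [show u ++ [s] ++ [p, q] = u ++ [s, p] ++ [q] by simp,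
        show u ++ [s] ++ [q, p] = u ++ [s, q] ++ [p] by simp, rBasisWord_append_singleton,
        rBasisWord_append_singleton]
      simp only [lBasisWord, List.map_append, lWord_append] at this ⊢
      simpa [mul_add, mul_assoc] using this
    · rw [show u ++ p :: q :: (t ++ [c]) = u ++ p :: q :: t ++ [c] by simp,
        show u ++ q :: p :: (t ++ [c]) = u ++ q :: p :: t ++ [c] by simp,
        rBasisWord_append_singleton, rBasisWord_append_singleton]
      exact lBasisWord_swap_mul_mem b (k := k - 1) (fun v hv => IH v _ (by omega))
        (by simp at hlen ⊢; omega)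
  · obtain rfl | ⟨t, c, rfl⟩ := List.eq_nil_or_concat' t
    · obtain rfl | ⟨u, s, rfl⟩ := List.eq_nil_or_concat' u
      · simp at hlen; omega
      have := junction u (by simp at hlen; omega)
        (l_mul_l_mul_r_self_mem_shortWordSpan K (b s) (b p))
      rw [show u ++ [s] ++ [p, p] = u ++ [s, p] ++ [p] by simp, rBasisWord_append_singleton]
      simp only [lBasisWord, List.map_append, lWord_append] at this ⊢
      simpa [mul_assoc] using this
    · rw [show u ++ p :: p :: (t ++ [c]) = u ++ p :: p :: t ++ [c] by simp,
        rBasisWord_append_singleton]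
      exact lBasisWord_dup_mul_mem b (k := k - 1) (fun v hv => IH v _ (by omega))
        (by simp at hlen ⊢; omega)

theorem lBasisWord_mul_r_mem_sortedSpan_of_length_le_one {w : List (Fin n)}
    (hw : w.length ≤ 1) (j : Fin n) : lBasisWord b w * r K (b j) ∈ sortedSpan b := by
  match w, hw with
  | [], _ =>
    have := rBasisWord_mem_sortedSpan_of_isChain b (w := [] ++ [j]) (by simp) (by simp)
    rwa [rBasisWord_append_singleton] at this
  | [i], _ =>
    by_cases h : i < j
    · have := rBasisWord_mem_sortedSpan_of_isChain b (w := [i] ++ [j]) (by simpa using h)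
        (by simp)
      rwa [rBasisWord_append_singleton] at this
    · simpa [lBasisWord] using l_mul_r_mem_sortedSpan b (not_lt.mp h)

theorem lWord_mul_r_mem_sortedSpan (v : List A) (z : A) : lWord K v * r K z ∈ sortedSpan b := by
  induction h : v.length using Nat.strong_induction_on generalizing v z with
  | _ m IH =>
  refine b.linearMap_apply_mem (LinearMap.mulLeft K (lWord K v) ∘ₗ r K) (fun j => ?_) z
  refine lWord_mul_mem_of_basis b v fun w hw => ?_
  change lBasisWord b w * r K (b j) ∈ sortedSpan b
  rcases le_or_gt m 1 with hm | hm
  · exact lBasisWord_mul_r_mem_sortedSpan_of_length_le_one b (by omega) j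
  · rw [← rBasisWord_append_singleton]
    exact rBasisWord_mem_sortedSpan_of_shorter b (k := m + 1) (by omega)
      (fun v' z' hv' => IH _ (by omega) v' z' rfl) _ (by simp; omega)

theorem sortedSpan_eq_top : sortedSpan b = ⊤ := by
  refine top_unique ((wordSpan_eq_top K).symm.le.trans (Submodule.span_le.mpr ?_))
  rintro _ (⟨v, rfl⟩ | ⟨v, z, rfl⟩)
  exacts [lWord_mem_sortedSpan b v, lWord_mul_r_mem_sortedSpan b v z]

end Basis

end UAlt

theorem uAlt_generators_card_le_general (K A : Type) [CommRing K] [NonUnitalNonAssocRing A]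
    [Module K A] (n : ℕ) (b : Module.Basis (Fin n) K A) :
    ∃ S : Finset (UAlt K A),
      (S.card : ℤ) ≤ 2 * 2 ^ n + ((n : ℤ) ^ 2 + n - 2) / 2 ∧
      Submodule.span K (S : Set (UAlt K A)) = ⊤ := by
  refine ⟨UAlt.sortedWords b, ?_, UAlt.sortedSpan_eq_top b⟩
  have hcard : (2 * (UAlt.sortedWords b).card + 2 : ℤ) ≤ 4 * 2 ^ n + n * (n + 1) := by
    exact_mod_cast UAlt.card_sortedWords b
  rw [← sub_le_iff_le_add', Int.le_ediv_iff_mul_le two_pos]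
  linarith

/-- If `A` is an alternative `K`-algebra that is free of rank `n` as a `K`-module, then
`U_Alt(A)` admits a set of `K`-module generators with at most
`2·2^n + (n² + n − 2)/2` elements. -/
theorem uAlt_generators_card_le (K A : Type) [CommRing K] [NonUnitalNonAssocRing A]
    [Module K A] [SMulCommClass K A A] [IsScalarTower K A A]
    (alt_left : ∀ x y : A, x * x * y = x * (x * y))
    (alt_right : ∀ x y : A, x * y * y = x * (y * y))
    (n : ℕ) (b : Module.Basis (Fin n) K A) :
    ∃ S : Finset (UAlt K A),
      (S.card : ℤ) ≤ 2 * 2 ^ n + ((n : ℤ) ^ 2 + n - 2) / 2 ∧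
      Submodule.span K (S : Set (UAlt K A)) = ⊤ :=
  uAlt_generators_card_le_general K A n b

end
end

section
/- Let K be a field and let A = K[X]/(X² + 1), regarded as a (nonunital) associative K-algebra. Then the homomorphism of unital K-algebras U_Alt(A) → (A₊)ᵒᵖ ⊗_K A₊ carrying the class of l_a to aᵒᵖ ⊗ 1 and the class of r_b to 1 ⊗ b is an isomorphism; in particular dim_K U_Alt(A) = 9. -/
/-!
In `U_Alt(A)` the defining relations read `⁅r_b, l_a⁆ = l_{ab} - l_b l_a = r_a r_b - r_{ab}`.
Hence as soon as every `r_b` commutes with every `l_a`, `l` is an anti-homomorphism and `r` a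
homomorphism, and the universal properties of the unitization and of the tensor product give an
inverse of `U_Alt(A) → (A₊)ᵒᵖ ⊗ A₊`. For unital `A` these commutators vanish on the diagonal
(`⁅r_a, l_a⁆ = l_{aa} - l_a l_a`) and whenever `a = 1` or `b = 1` (using that `l_1` is
idempotent), so by bilinearity they vanish identically when `A` is spanned by `1` and one more
element, as `K[X]/(X² + 1)` is. The dimension is then `3 · 3 = 9`.
-/

noncomputable section

open scoped TensorProduct

open Polynomial

section NonUnitalNonAssoc

variable {R A : Type} [CommRing R] [NonUnitalNonAssocRing A] [Module R A]

variable (R A) in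
def lUAltₗ : A →ₗ[R] UAlt R A :=
  (RingQuot.mkAlgHom R (AltRel R A)).toLinearMap ∘ₗ TensorAlgebra.ι R ∘ₗ
    LinearMap.inl R A A

variable (R A) in
def rUAltₗ : A →ₗ[R] UAlt R A :=
  (RingQuot.mkAlgHom R (AltRel R A)).toLinearMap ∘ₗ TensorAlgebra.ι R ∘ₗ
    LinearMap.inr R A A

lemma lUAlt_add (a b : A) : lUAlt R A (a + b) = lUAlt R A a + lUAlt R A b :=
  map_add (lUAltₗ R A) a b

lemma rUAlt_add (a b : A) : rUAlt R A (a + b) = rUAlt R A a + rUAlt R A b :=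
  map_add (rUAltₗ R A) a b

@[simp]
lemma lUAlt_zero : lUAlt R A 0 = 0 := map_zero (lUAltₗ R A)

@[simp]
lemma rUAlt_zero : rUAlt R A 0 = 0 := map_zero (rUAltₗ R A)

lemma lUAlt_smul (c : R) (a : A) : lUAlt R A (c • a) = c • lUAlt R A a :=
  map_smul (lUAltₗ R A) c a

lemma rUAlt_smul (c : R) (a : A) : rUAlt R A (c • a) = c • rUAlt R A a :=
  map_smul (rUAltₗ R A) c a

lemma lUAlt_mul_self (a : A) : lUAlt R A (a * a) = lUAlt R A a * lUAlt R A a := by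
  have h := RingQuot.mkAlgHom_rel R (AltRel.lsq (R := R) a)
  rw [map_mul] at h
  exact h

lemma rUAlt_mul_self (a : A) : rUAlt R A (a * a) = rUAlt R A a * rUAlt R A a := by
  have h := RingQuot.mkAlgHom_rel R (AltRel.rsq (R := R) a)
  rw [map_mul] at h
  exact h

lemma lie_rUAlt_lUAlt_eq_lUAlt_sub (a b : A) :
    ⁅rUAlt R A b, lUAlt R A a⁆ = lUAlt R A (a * b) - lUAlt R A b * lUAlt R A a := by
  have h := RingQuot.mkAlgHom_rel R (AltRel.lmid (R := R) a b)
  simp only [map_sub, map_mul] at h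
  exact h.symm

lemma lie_rUAlt_lUAlt_eq_sub_rUAlt (a b : A) :
    ⁅rUAlt R A b, lUAlt R A a⁆ = rUAlt R A a * rUAlt R A b - rUAlt R A (a * b) := by
  have h := RingQuot.mkAlgHom_rel R (AltRel.rmid (R := R) a b)
  simp only [map_sub, map_mul] at h
  exact h

lemma commute_rUAlt_lUAlt_self (a : A) : Commute (rUAlt R A a) (lUAlt R A a) := by
  rw [commute_iff_lie_eq, lie_rUAlt_lUAlt_eq_lUAlt_sub, lUAlt_mul_self, sub_self]

lemma lUAlt_mul_add_mul (a b : A) :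
    lUAlt R A (a * b + b * a) = lUAlt R A a * lUAlt R A b + lUAlt R A b * lUAlt R A a := by
  have h := lUAlt_mul_self (R := R) (a + b)
  simp only [add_mul, mul_add, lUAlt_add, lUAlt_mul_self] at h
  rw [lUAlt_add]
  linear_combination (norm := abel) h

lemma lUAlt_mul_of_commute {a b : A} (h : Commute (rUAlt R A b) (lUAlt R A a)) :
    lUAlt R A (a * b) = lUAlt R A b * lUAlt R A a := by
  rw [← sub_eq_zero, ← lie_rUAlt_lUAlt_eq_lUAlt_sub, ← commute_iff_lie_eq]
  exact h

lemma rUAlt_mul_of_commute {a b : A} (h : Commute (rUAlt R A b) (lUAlt R A a)) :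
    rUAlt R A (a * b) = rUAlt R A a * rUAlt R A b := by
  rw [eq_comm, ← sub_eq_zero, ← lie_rUAlt_lUAlt_eq_sub_rUAlt, ← commute_iff_lie_eq]
  exact h

end NonUnitalNonAssoc

section Unital

variable {R A : Type} [CommRing R] [Ring A] [Module R A]

lemma lUAlt_one_mul_self : lUAlt R A 1 * lUAlt R A 1 = lUAlt R A 1 := by
  rw [← lUAlt_mul_self, one_mul]

lemma lUAlt_one_mul_lUAlt_sub (b : A) :
    lUAlt R A 1 * lUAlt R A b - lUAlt R A b = lUAlt R A b - lUAlt R A b * lUAlt R A 1 := by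
  have h := lUAlt_mul_add_mul (R := R) 1 b
  rw [one_mul, mul_one, lUAlt_add] at h
  linear_combination (norm := abel) -h

lemma commute_rUAlt_lUAlt_one (b : A) : Commute (rUAlt R A b) (lUAlt R A 1) := by
  set e := lUAlt R A 1
  set D := ⁅rUAlt R A b, e⁆ with hD
  have hD_left : D = lUAlt R A b - lUAlt R A b * e := by
    rw [hD, lie_rUAlt_lUAlt_eq_lUAlt_sub, one_mul]
  have hD_right : D = e * lUAlt R A b - lUAlt R A b := by
    rw [hD_left, lUAlt_one_mul_lUAlt_sub]
  have he : e * e = e := lUAlt_one_mul_self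
  have hDe : D * e = 0 := by
    rw [hD_left, sub_mul, mul_assoc, he, sub_self]
  have heD : e * D = 0 := by
    rw [hD_right, mul_sub, ← mul_assoc, he, sub_self]
  -- any commutator `D = ⁅x, e⁆` with an idempotent `e` satisfies `D = D e + e D`
  have hD_eq : D = D * e + e * D := by
    simp only [hD, Ring.lie_def, sub_mul, mul_sub, mul_assoc, he]
    rw [← mul_assoc e e, he]
    abel
  rw [commute_iff_lie_eq, ← hD, hD_eq, hDe, heD, add_zero]

lemma lUAlt_one_mul_lUAlt (b : A) : lUAlt R A 1 * lUAlt R A b = lUAlt R A b := by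
  have h := (commute_iff_lie_eq.mp (commute_rUAlt_lUAlt_one (R := R) b))
  rw [lie_rUAlt_lUAlt_eq_lUAlt_sub, one_mul, sub_eq_zero, eq_comm] at h
  rw [← sub_eq_zero, lUAlt_one_mul_lUAlt_sub, h, sub_self]

lemma commute_rUAlt_one_lUAlt (a : A) : Commute (rUAlt R A 1) (lUAlt R A a) := by
  rw [commute_iff_lie_eq, lie_rUAlt_lUAlt_eq_lUAlt_sub, mul_one, lUAlt_one_mul_lUAlt, sub_self]

lemma commute_rUAlt_lUAlt_of_mem_span_pair {t : A}
    (ht : ∀ a : A, a ∈ Submodule.span R {1, t}) (a b : A) :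
    Commute (rUAlt R A b) (lUAlt R A a) := by
  obtain ⟨α, β, rfl⟩ := Submodule.mem_span_pair.mp (ht a)
  obtain ⟨γ, δ, rfl⟩ := Submodule.mem_span_pair.mp (ht b)
  simp only [lUAlt_add, lUAlt_smul, rUAlt_add, rUAlt_smul]
  refine .add_left (.add_right ?_ ?_) (.add_right ?_ ?_) <;> refine .smul_left (.smul_right ?_ _) _
  · exact commute_rUAlt_one_lUAlt 1
  · exact commute_rUAlt_one_lUAlt t
  · exact commute_rUAlt_lUAlt_one t
  · exact commute_rUAlt_lUAlt_self t

end Unital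

section Associative

open MulOpposite

variable {R A : Type} [CommRing R] [NonUnitalRing A] [Module R A] [IsScalarTower R A A]
  [SMulCommClass R A A]

variable (R A) in
def toTensorUnitization : UAlt R A →ₐ[R] (Unitization R A)ᵐᵒᵖ ⊗[R] Unitization R A :=
  RingQuot.liftAlgHom R ⟨TensorAlgebra.lift R <| LinearMap.coprod
    (Algebra.TensorProduct.includeLeft.toLinearMap ∘ₗ (opLinearEquiv R).toLinearMap ∘ₗ
      Unitization.inrHom R R A)
    (Algebra.TensorProduct.includeRight.toLinearMap ∘ₗ Unitization.inrHom R R A), by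
    intro u v h
    cases h <;> simp [lT, rT, Algebra.TensorProduct.tmul_mul_tmul, ← op_mul]⟩

@[simp]
lemma toTensorUnitization_lUAlt (a : A) :
    toTensorUnitization R A (lUAlt R A a) = op (a : Unitization R A) ⊗ₜ[R] 1 := by
  exact (RingQuot.liftAlgHom_mkAlgHom_apply _ _ _ _).trans (by simp [lT])

@[simp]
lemma toTensorUnitization_rUAlt (b : A) :
    toTensorUnitization R A (rUAlt R A b) = 1 ⊗ₜ[R] (b : Unitization R A) := by
  exact (RingQuot.liftAlgHom_mkAlgHom_apply _ _ _ _).trans (by simp [rT])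

@[simps]
def lUAltOpHom (h : ∀ a b : A, Commute (rUAlt R A b) (lUAlt R A a)) :
    A →ₙₐ[R] (UAlt R A)ᵐᵒᵖ where
  toFun a := op (lUAlt R A a)
  map_add' a b := by simp [lUAlt_add]
  map_smul' c a := by simp [lUAlt_smul]
  map_zero' := by simp
  map_mul' a b := by simp [lUAlt_mul_of_commute (h a b)]

@[simps]
def rUAltHom (h : ∀ a b : A, Commute (rUAlt R A b) (lUAlt R A a)) : A →ₙₐ[R] UAlt R A where
  toFun := rUAlt R A
  map_add' := rUAlt_add
  map_smul' := rUAlt_smul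
  map_zero' := rUAlt_zero
  map_mul' a b := rUAlt_mul_of_commute (h a b)

lemma opComm_lift_lUAltOpHom_op (h : ∀ a b : A, Commute (rUAlt R A b) (lUAlt R A a))
    (x : Unitization R A) :
    AlgHom.opComm (Unitization.lift (lUAltOpHom h)) (op x) =
      algebraMap R (UAlt R A) x.fst + lUAlt R A x.snd := rfl

lemma lift_rUAltHom (h : ∀ a b : A, Commute (rUAlt R A b) (lUAlt R A a))
    (x : Unitization R A) :
    Unitization.lift (rUAltHom h) x = algebraMap R (UAlt R A) x.fst + rUAlt R A x.snd := rfl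

def ofTensorUnitization (h : ∀ a b : A, Commute (rUAlt R A b) (lUAlt R A a)) :
    (Unitization R A)ᵐᵒᵖ ⊗[R] Unitization R A →ₐ[R] UAlt R A :=
  Algebra.TensorProduct.lift (AlgHom.opComm (Unitization.lift (lUAltOpHom h)))
    (Unitization.lift (rUAltHom h)) (by
      intro x y
      rw [← op_unop x, opComm_lift_lUAltOpHom_op, lift_rUAltHom]
      exact .add_left (Algebra.commute_algebraMap_left _ _)
        (.add_right (Algebra.commute_algebraMap_right _ _) (h _ _).symm))

lemma ofTensorUnitization_comp_toTensorUnitization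
    (h : ∀ a b : A, Commute (rUAlt R A b) (lUAlt R A a)) :
    (ofTensorUnitization h).comp (toTensorUnitization R A) = AlgHom.id R (UAlt R A) := by
  apply RingQuot.ringQuot_ext'
  apply TensorAlgebra.hom_ext
  ext a
  · change ofTensorUnitization h (toTensorUnitization R A (lUAlt R A a)) = lUAlt R A a
    simp [ofTensorUnitization]
  · change ofTensorUnitization h (toTensorUnitization R A (rUAlt R A a)) = rUAlt R A a
    simp [ofTensorUnitization]

lemma toTensorUnitization_comp_ofTensorUnitization
    (h : ∀ a b : A, Commute (rUAlt R A b) (lUAlt R A a)) :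
    (toTensorUnitization R A).comp (ofTensorUnitization h) = AlgHom.id R _ := by
  refine Algebra.TensorProduct.ext (AlgHom.ext fun x => ?_) (Unitization.algHom_ext'' fun b => ?_)
  · induction x using MulOpposite.rec' with | _ x
    induction x using Unitization.ind
    simp [ofTensorUnitization, ← TensorProduct.add_tmul, ← op_add,
      Unitization.algebraMap_eq_inl]
  · simp [ofTensorUnitization]

variable (R A) in
def equivTensorUnitization (h : ∀ a b : A, Commute (rUAlt R A b) (lUAlt R A a)) :
    UAlt R A ≃ₐ[R] (Unitization R A)ᵐᵒᵖ ⊗[R] Unitization R A :=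
  AlgEquiv.ofAlgHom (toTensorUnitization R A) (ofTensorUnitization h)
    (toTensorUnitization_comp_ofTensorUnitization h)
    (ofTensorUnitization_comp_toTensorUnitization h)

end Associative

section Finrank

variable {K A : Type} [Field K] [AddCommGroup A] [Module K A] [FiniteDimensional K A]

lemma finrank_unitization : Module.finrank K (Unitization K A) = 1 + Module.finrank K A := by
  rw [(Unitization.linearEquiv K K A).finrank_eq, Module.finrank_prod, Module.finrank_self]

lemma finrank_unitization_op_tensor_unitization :
    Module.finrank K ((Unitization K A)ᵐᵒᵖ ⊗[K] Unitization K A) =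
      (1 + Module.finrank K A) ^ 2 := by
  rw [Module.finrank_tensorProduct, MulOpposite.finrank, finrank_unitization, sq]

end Finrank

lemma PowerBasis.mem_span_one_gen {R S : Type} [CommRing R] [Ring S] [Algebra R S]
    (pb : PowerBasis R S) (h : pb.dim ≤ 2) (y : S) : y ∈ Submodule.span R {1, pb.gen} := by
  nontriviality S
  obtain ⟨f, hf, rfl⟩ := pb.exists_eq_aeval y
  rw [Polynomial.eq_X_add_C_of_natDegree_le_one (by omega : f.natDegree ≤ 1)]
  exact Submodule.mem_span_pair.mpr ⟨f.coeff 0, f.coeff 1, by simp [Algebra.smul_def, add_comm]⟩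

lemma natDegree_X_sq_add_one {R : Type} [CommRing R] [Nontrivial R] :
    (X ^ 2 + 1 : R[X]).natDegree = 2 := by
  compute_degree!

/-- For `K` a field and `A = K[X]/(X² + 1)` regarded as a nonunital associative
`K`-algebra, the canonical map `U_Alt(A) → (A₊)ᵒᵖ ⊗_K A₊`, `l_a ↦ aᵒᵖ ⊗ 1`,
`r_b ↦ 1 ⊗ b`, is an isomorphism; in particular `dim_K U_Alt(A) = 9`. -/
theorem uAlt_adjoinRootXsqAddOne (K : Type) [Field K] :
    (∃ f : UAlt K (AdjoinRoot (X ^ 2 + 1 : K[X])) →ₐ[K]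
        (Unitization K (AdjoinRoot (X ^ 2 + 1 : K[X])))ᵐᵒᵖ ⊗[K]
          Unitization K (AdjoinRoot (X ^ 2 + 1 : K[X])),
      (∀ a, f (lUAlt K (AdjoinRoot (X ^ 2 + 1 : K[X])) a) =
          MulOpposite.op (a : Unitization K (AdjoinRoot (X ^ 2 + 1 : K[X]))) ⊗ₜ[K] 1) ∧
      (∀ b, f (rUAlt K (AdjoinRoot (X ^ 2 + 1 : K[X])) b) =
          1 ⊗ₜ[K] (b : Unitization K (AdjoinRoot (X ^ 2 + 1 : K[X])))) ∧
      Function.Bijective f) ∧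
    Module.finrank K (UAlt K (AdjoinRoot (X ^ 2 + 1 : K[X]))) = 9 := by
  have hne : (X ^ 2 + 1 : K[X]) ≠ 0 := by
    intro h
    simpa [h] using natDegree_X_sq_add_one (R := K)
  let pb := AdjoinRoot.powerBasis hne
  have hdim : pb.dim = 2 := by rw [AdjoinRoot.powerBasis_dim, natDegree_X_sq_add_one]
  have := pb.finite
  have hcomm := commute_rUAlt_lUAlt_of_mem_span_pair (pb.mem_span_one_gen hdim.le)
  let e := equivTensorUnitization K _ hcomm
  refine ⟨⟨toTensorUnitization K _, toTensorUnitization_lUAlt, toTensorUnitization_rUAlt,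
    e.bijective⟩, ?_⟩
  rw [e.toLinearEquiv.finrank_eq, finrank_unitization_op_tensor_unitization, pb.finrank, hdim]
  norm_num

end
end
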